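/- arXiv:2006.01391 — 2 statements merged into one kernel-verified Lean document; each statement's English description precedes it below -/
import Mathlib

section
/- A truncated-geometric compound of NBM distributions is NBM: if M ~ TGeometric(ρ) (P(M=k) = ρ(1-ρ)^{k-1}, k ≥ 1), N_1, N_2, ... are i.i.d. with distribution f_N on {1,2,...}, and S_{N_j} are independent NBM(π,p) random variables, then S = ∑_{j=1}^M S_{N_j} has NBM(π*, p) distribution, where π* is the distribution of N* = ∑_{j=1}^M N_j. -/
open MeasureTheory ProbabilityTheory

/-- The negative binomial probability function `nb(k,p)(x) = C(k+x-1,x) p^k (1-p)^x`. -/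
noncomputable def nb (k : ℕ) (p : ℝ) (x : ℕ) : ℝ :=
  (Nat.choose (k + x - 1) x : ℝ) * p ^ k * (1 - p) ^ x

open PowerSeries Finset
open scoped ENNReal

/-!
Probability generating functions are handled as formal power series over `ℝ≥0∞`, where every
rearrangement of a sum of nonnegative terms is free. The law `nb k p` is generated by `Gᵏ`, `G` the
generating series of the geometric law `p (1 - p)ⁱ`, so an `NBM(π, p)` variable has generating
series `π(G)`. A random sum `∑_{j<M} Y_j` of i.i.d. variables with generating series `H`,
independent of `M`, has generating series `P_M(H)`. Hence `S` has generating series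
`P_M(π(G)) = (P_M(π))(G) = P_{N*}(G)`, which says that `S ~ NBM(π*, p)`.
-/

theorem ENNReal.tsum_tsum_eq_tsum_sum_antidiagonal (F : ℕ → ℕ → ℝ≥0∞) :
    ∑' k, ∑' l, F k l = ∑' n, ∑ kl ∈ antidiagonal n, F kl.1 kl.2 := by
  rw [← ENNReal.tsum_prod, ← HasAntidiagonal.sigmaAntidiagonalEquivProd.tsum_eq,
    ENNReal.tsum_sigma']
  refine tsum_congr fun n => ?_
  rw [← Finset.tsum_subtype]
  rfl

namespace PowerSeries

theorem mk_one_pow_eq_mk_multichoose {R : Type*} [CommSemiring R] (k : ℕ) :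
    (mk 1 : R⟦X⟧) ^ k = mk fun n => (k.multichoose n : R) := by
  induction k with
  | zero => ext (_ | n) <;> simp
  | succ k ih =>
    ext n
    rw [pow_succ, ih, coeff_mul, Nat.sum_antidiagonal_eq_sum_range_succ_mk]
    simp only [coeff_mk, Pi.one_apply, mul_one]
    rw [← Nat.cast_sum, Nat.sum_range_multichoose, Nat.multichoose_eq,
      show k + 1 + n - 1 = n + k by omega, Nat.choose_symm_add]

theorem pow_mk_mul_pow {R : Type*} [CommSemiring R] (a b : R) (k : ℕ) :
    (mk fun n => a * b ^ n) ^ k = mk fun n => (k.multichoose n : R) * a ^ k * b ^ n := by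
  have h : (mk fun n => a * b ^ n) = C a * rescale b (mk 1) := by
    ext n; simp [coeff_rescale]
  rw [h, mul_pow, ← map_pow, ← map_pow, mk_one_pow_eq_mk_multichoose]
  ext n
  rw [coeff_C_mul, coeff_rescale, coeff_mk, coeff_mk]
  ring

/-- `A(G) = ∑ₖ aₖ Gᵏ`, summed coefficientwise; over `ℝ≥0∞` this needs no condition on the constant
term of `G`, unlike `PowerSeries.subst`. -/
noncomputable def tsumSubst (A G : ℝ≥0∞⟦X⟧) : ℝ≥0∞⟦X⟧ :=
  mk fun n => ∑' k, coeff k A * coeff n (G ^ k)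

@[simp]
theorem coeff_tsumSubst (A G : ℝ≥0∞⟦X⟧) (n : ℕ) :
    coeff n (A.tsumSubst G) = ∑' k, coeff k A * coeff n (G ^ k) :=
  coeff_mk _ _

theorem one_tsumSubst (G : ℝ≥0∞⟦X⟧) : (1 : ℝ≥0∞⟦X⟧).tsumSubst G = 1 := by
  ext n
  rw [coeff_tsumSubst, tsum_eq_single 0 fun k hk => by simp [coeff_one, hk]]
  simp

theorem mul_tsumSubst (A B G : ℝ≥0∞⟦X⟧) :
    (A * B).tsumSubst G = A.tsumSubst G * B.tsumSubst G := by
  ext n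
  calc coeff n ((A * B).tsumSubst G)
      = ∑' m, ∑ kl ∈ antidiagonal m, coeff kl.1 A * coeff kl.2 B * coeff n (G ^ (kl.1 + kl.2)) := by
        simp only [coeff_tsumSubst, coeff_mul, sum_mul]
        exact tsum_congr fun m => sum_congr rfl fun kl hkl => by rw [mem_antidiagonal.mp hkl]
    _ = ∑' k, ∑' l, coeff k A * coeff l B * coeff n (G ^ (k + l)) :=
        (ENNReal.tsum_tsum_eq_tsum_sum_antidiagonal
          fun k l => coeff k A * coeff l B * coeff n (G ^ (k + l))).symm
    _ = ∑ ij ∈ antidiagonal n, ∑' k, ∑' l,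
          coeff k A * coeff ij.1 (G ^ k) * (coeff l B * coeff ij.2 (G ^ l)) := by
        rw [← Summable.tsum_finsetSum fun _ _ => ENNReal.summable]
        refine tsum_congr fun k => ?_
        rw [← Summable.tsum_finsetSum fun _ _ => ENNReal.summable]
        refine tsum_congr fun l => ?_
        rw [pow_add, coeff_mul, mul_sum]
        exact sum_congr rfl fun ij _ => by ring
    _ = coeff n (A.tsumSubst G * B.tsumSubst G) := by
        simp only [coeff_mul, coeff_tsumSubst, ← ENNReal.tsum_mul_left, ← ENNReal.tsum_mul_right]
        exact sum_congr rfl fun _ _ => ENNReal.tsum_comm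

theorem pow_tsumSubst (A G : ℝ≥0∞⟦X⟧) (m : ℕ) : (A ^ m).tsumSubst G = A.tsumSubst G ^ m := by
  induction m with
  | zero => exact one_tsumSubst G
  | succ m ih => rw [pow_succ, mul_tsumSubst, ih, pow_succ]

theorem tsumSubst_tsumSubst (A F G : ℝ≥0∞⟦X⟧) :
    (A.tsumSubst F).tsumSubst G = A.tsumSubst (F.tsumSubst G) := by
  ext n
  simp only [coeff_tsumSubst, ← pow_tsumSubst, ← ENNReal.tsum_mul_left, ← ENNReal.tsum_mul_right]
  rw [ENNReal.tsum_comm]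
  exact tsum_congr fun m => tsum_congr fun k => (mul_assoc _ _ _)

end PowerSeries

theorem nb_nonneg {p : ℝ} (hp0 : 0 ≤ p) (hp1 : p ≤ 1) (k n : ℕ) : 0 ≤ nb k p n := by
  have : 0 ≤ 1 - p := by linarith
  unfold nb
  positivity

theorem nb_le_one {p : ℝ} (hp0 : 0 ≤ p) (hp1 : p ≤ 1) (k n : ℕ) : nb k p n ≤ 1 := by
  have hq : 0 ≤ 1 - p := by linarith
  rcases k with _ | d
  · rcases n with _ | n <;> simp [nb]
  · calc nb (d + 1) p n ≤ (1 - p) ^ n * p ^ (d + n - n) * ((d + n).choose n : ℝ) := by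
          rw [nb, add_tsub_cancel_right, show d + 1 + n - 1 = d + n by omega, pow_succ]
          have : p ^ d * p ≤ p ^ d := mul_le_of_le_one_right (by positivity) hp1
          nlinarith [show (0 : ℝ) ≤ (d + n).choose n * (1 - p) ^ n by positivity]
      _ ≤ ∑ m ∈ range (d + n + 1), (1 - p) ^ m * p ^ (d + n - m) * ((d + n).choose m : ℝ) :=
          single_le_sum (f := fun m => (1 - p) ^ m * p ^ (d + n - m) * ((d + n).choose m : ℝ))
            (fun m _ => by positivity) (mem_range.mpr (by omega))
      _ = 1 := by rw [← add_pow, sub_add_cancel, one_pow]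

noncomputable def geometricPGF (p : ℝ) : ℝ≥0∞⟦X⟧ :=
  mk fun i => ENNReal.ofReal p * ENNReal.ofReal (1 - p) ^ i

theorem coeff_geometricPGF_pow {p : ℝ} (hp0 : 0 ≤ p) (hp1 : p ≤ 1) (k n : ℕ) :
    coeff n (geometricPGF p ^ k) = ENNReal.ofReal (nb k p n) := by
  have hq : 0 ≤ 1 - p := by linarith
  symm
  rw [geometricPGF, pow_mk_mul_pow, coeff_mk, nb, ← Nat.multichoose_eq,
    ENNReal.ofReal_mul (by positivity), ENNReal.ofReal_mul (by positivity), ENNReal.ofReal_pow hp0,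
    ENNReal.ofReal_pow hq, ENNReal.ofReal_natCast]

namespace ProbabilityTheory

variable {Ω : Type*} [MeasurableSpace Ω] {μ : Measure Ω}

noncomputable def pgf (μ : Measure Ω) (Y : Ω → ℕ) : ℝ≥0∞⟦X⟧ := mk fun n => μ {ω | Y ω = n}

@[simp]
theorem coeff_pgf (Y : Ω → ℕ) (n : ℕ) : coeff n (pgf μ Y) = μ {ω | Y ω = n} :=
  coeff_mk _ _

theorem pgf_add {A B : Ω → ℕ} (hA : Measurable A) (hB : Measurable B) (h : IndepFun A B μ) :
    pgf μ (A + B) = pgf μ A * pgf μ B := by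
  ext n
  have hset : {ω | (A + B) ω = n} = ⋃ ij ∈ antidiagonal n, A ⁻¹' {ij.1} ∩ B ⁻¹' {ij.2} := by
    ext ω
    simp [HasAntidiagonal.mem_antidiagonal]
  rw [coeff_pgf, hset, measure_biUnion_finset, coeff_mul]
  · simp only [coeff_pgf]
    exact sum_congr rfl fun ij _ => h.measure_inter_preimage_eq_mul _ _
      (measurableSet_singleton _) (measurableSet_singleton _)
  · intro ij _ ij' _ hne
    refine Set.disjoint_left.mpr fun ω hω hω' => hne ?_
    simp only [Set.mem_inter_iff, Set.mem_preimage, Set.mem_singleton_iff] at hω hω'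
    exact Prod.ext (hω.1.symm.trans hω'.1) (hω.2.symm.trans hω'.2)
  · exact fun ij _ => (hA (measurableSet_singleton _)).inter (hB (measurableSet_singleton _))

theorem pgf_zero [IsProbabilityMeasure μ] : pgf μ 0 = 1 := by
  ext n
  rcases eq_or_ne n 0 with rfl | hn
  · simp
  · simp [coeff_one, hn, Ne.symm hn]

theorem pgf_sum [IsProbabilityMeasure μ] {ι : Type*} {S : ι → Ω → ℕ} (hS : ∀ j, Measurable (S j))
    (h : iIndepFun S μ) (s : Finset ι) : pgf μ (∑ j ∈ s, S j) = ∏ j ∈ s, pgf μ (S j) := by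
  classical
  induction s using Finset.induction_on with
  | empty => simp [pgf_zero]
  | insert i s hi ih =>
    rw [sum_insert hi, prod_insert hi, add_comm,
      pgf_add (by fun_prop) (hS i) (h.indepFun_finsetSum_of_notMem hS hi), ih, mul_comm]

theorem measure_randomSum_eq_tsum {M : Ω → ℕ} {S : ℕ → Ω → ℕ} (hM : Measurable M)
    (hS : ∀ j, Measurable (S j)) (hMS : IndepFun M (fun ω j => S j ω) μ) (n : ℕ) :
    μ {ω | ∑ j ∈ range (M ω), S j ω = n} =
      ∑' m, μ {ω | M ω = m} * μ {ω | ∑ j ∈ range m, S j ω = n} := by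
  set sumEq : ℕ → Set (ℕ → ℕ) := fun m => {s | ∑ j ∈ range m, s j = n}
  have hsumEq : ∀ m, MeasurableSet (sumEq m) := fun m =>
    Finset.measurable_sum _ (fun j _ => measurable_pi_apply j) (measurableSet_singleton n)
  have hset : {ω | ∑ j ∈ range (M ω), S j ω = n} =
      ⋃ m, M ⁻¹' {m} ∩ (fun ω j => S j ω) ⁻¹' sumEq m := by
    ext ω
    simp [sumEq]
  rw [hset, measure_iUnion]
  · exact tsum_congr fun m =>
      hMS.measure_inter_preimage_eq_mul _ _ (measurableSet_singleton m) (hsumEq m)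
  · intro m m' hne
    exact Set.disjoint_left.mpr fun ω hω hω' => hne (hω.1.symm.trans hω'.1)
  · exact fun m =>
      (hM (measurableSet_singleton m)).inter (measurable_pi_lambda _ hS (hsumEq m))

theorem pgf_randomSum [IsProbabilityMeasure μ] {M : Ω → ℕ} {S : ℕ → Ω → ℕ} (hM : Measurable M)
    (hS : ∀ j, Measurable (S j)) (hSi : iIndepFun S μ) (hMS : IndepFun M (fun ω j => S j ω) μ)
    {G : ℝ≥0∞⟦X⟧} (hG : ∀ j, pgf μ (S j) = G) :
    pgf μ (fun ω => ∑ j ∈ range (M ω), S j ω) = (pgf μ M).tsumSubst G := by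
  ext n
  rw [coeff_pgf, measure_randomSum_eq_tsum hM hS hMS, coeff_tsumSubst]
  refine tsum_congr fun m => ?_
  have hGm : G ^ m = pgf μ (∑ j ∈ range m, S j) := by
    rw [pgf_sum hS hSi, prod_congr rfl fun j _ => hG j, prod_const, card_range]
  rw [hGm]
  simp only [coeff_pgf, Finset.sum_apply]

theorem pgf_eq_tsumSubst_of_nbm [IsFiniteMeasure μ] {Y : Ω → ℕ} {p : ℝ} (hp0 : 0 ≤ p)
    (hp1 : p ≤ 1) {f : ℕ → ℝ} (hf : ∀ k, 0 ≤ f k) (hfs : Summable f)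
    (hY : ∀ n, (μ {ω | Y ω = n}).toReal = ∑' k, f k * nb k p n) :
    pgf μ Y = (mk fun k => ENNReal.ofReal (f k)).tsumSubst (geometricPGF p) := by
  ext n
  have hsum : Summable fun k => f k * nb k p n :=
    hfs.of_nonneg_of_le (fun k => mul_nonneg (hf k) (nb_nonneg hp0 hp1 k n))
      fun k => mul_le_of_le_one_right (hf k) (nb_le_one hp0 hp1 k n)
  rw [coeff_pgf, ← ENNReal.ofReal_toReal (measure_ne_top μ _), hY,
    ENNReal.ofReal_tsum_of_nonneg (fun k => mul_nonneg (hf k) (nb_nonneg hp0 hp1 k n)) hsum,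
    coeff_tsumSubst]
  exact tsum_congr fun k => by
    rw [coeff_mk, coeff_geometricPGF_pow hp0 hp1, ENNReal.ofReal_mul (hf k)]

end ProbabilityTheory

theorem compound_tgeom_nbm_general
    {Ω Ω' : Type*} [MeasureSpace Ω] [IsProbabilityMeasure (ℙ : Measure Ω)]
    [MeasureSpace Ω'] [IsProbabilityMeasure (ℙ : Measure Ω')]
    (p ρ : ℝ) (hp0 : 0 < p) (hp1 : p < 1)
    (f : ℕ → ℝ) (hf : ∀ k, 0 ≤ f k) (hfsum : ∑' k : ℕ, f k = 1)
    (M : Ω → ℕ) (S : ℕ → Ω → ℕ) (M' : Ω' → ℕ) (N : ℕ → Ω' → ℕ)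
    (hMmeas : Measurable M) (hSmeas : ∀ j, Measurable (S j))
    (hM'meas : Measurable M') (hNmeas : ∀ j, Measurable (N j))
    (hM : ∀ m, 1 ≤ m → (ℙ {ω | M ω = m}).toReal = ρ * (1 - ρ) ^ (m - 1))
    (hM0 : ℙ {ω | M ω = 0} = 0)
    (hS : ∀ j x, (ℙ {ω | S j ω = x}).toReal = ∑' k : ℕ, f k * nb k p x)
    (hSindep : iIndepFun S ℙ)
    (hMS : IndepFun M (fun ω j => S j ω) ℙ)
    (hM' : ∀ m, 1 ≤ m → (ℙ {ω | M' ω = m}).toReal = ρ * (1 - ρ) ^ (m - 1))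
    (hM'0 : ℙ {ω | M' ω = 0} = 0)
    (hN : ∀ j k, (ℙ {ω | N j ω = k}).toReal = f k)
    (hNindep : iIndepFun N ℙ)
    (hM'N : IndepFun M' (fun ω j => N j ω) ℙ)
    (x : ℕ) :
    (ℙ {ω | ∑ j ∈ Finset.range (M ω), S j ω = x}).toReal =
      ∑' k : ℕ, (ℙ {ω | ∑ j ∈ Finset.range (M' ω), N j ω = k}).toReal * nb k p x := by
  have hfs : Summable f := by
    by_contra h
    rw [tsum_eq_zero_of_not_summable h] at hfsum
    exact zero_ne_one hfsum
  set F : ℝ≥0∞⟦X⟧ := mk fun k => ENNReal.ofReal (f k)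
  have hSpgf : ∀ j, pgf ℙ (S j) = F.tsumSubst (geometricPGF p) := fun j =>
    pgf_eq_tsumSubst_of_nbm hp0.le hp1.le hf hfs (hS j)
  have hNpgf : ∀ j, pgf ℙ (N j) = F := fun j => by
    ext k
    rw [coeff_pgf, coeff_mk, ← hN j k, ENNReal.ofReal_toReal (measure_ne_top _ _)]
  have hMM' : pgf ℙ M = pgf ℙ M' := by
    ext (_ | m)
    · simp [hM0, hM'0]
    · rw [coeff_pgf, coeff_pgf, ← ENNReal.toReal_eq_toReal_iff' (measure_ne_top _ _)
        (measure_ne_top _ _), hM _ (by omega), hM' _ (by omega)]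
  have hpgf : pgf ℙ (fun ω => ∑ j ∈ Finset.range (M ω), S j ω) =
      (pgf ℙ (fun ω => ∑ j ∈ Finset.range (M' ω), N j ω)).tsumSubst (geometricPGF p) := by
    rw [pgf_randomSum hMmeas hSmeas hSindep hMS hSpgf,
      pgf_randomSum hM'meas hNmeas hNindep hM'N hNpgf, hMM', tsumSubst_tsumSubst]
  have hx := congrArg (coeff x) hpgf
  simp only [coeff_pgf, coeff_tsumSubst, coeff_geometricPGF_pow hp0.le hp1.le] at hx
  rw [hx, ENNReal.tsum_toReal_eq fun k => ENNReal.mul_ne_top (measure_ne_top _ _)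
    ENNReal.ofReal_ne_top]
  simp only [ENNReal.toReal_mul, ENNReal.toReal_ofReal (nb_nonneg hp0.le hp1.le _ x)]

/-- A truncated-geometric compound of NBM distributions is NBM: if
`M ~ TGeometric ρ` (`P(M = m) = ρ(1-ρ)^{m-1}`, `m ≥ 1`), and `S₁, S₂, ...` are
i.i.d. `NBM(π, p)` random variables independent of `M`, then
`S = ∑_{j=1}^M S_j` has `NBM(π*, p)` distribution where `π*` is the distribution
of `N* = ∑_{j=1}^M N_j`, the `N_j` being i.i.d. with distribution `π = f`,
independent of `M' ~ TGeometric ρ`. -/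
theorem compound_tgeom_nbm
    {Ω Ω' : Type*} [MeasureSpace Ω] [IsProbabilityMeasure (ℙ : Measure Ω)]
    [MeasureSpace Ω'] [IsProbabilityMeasure (ℙ : Measure Ω')]
    (p ρ : ℝ) (hp0 : 0 < p) (hp1 : p < 1) (hρ0 : 0 < ρ) (hρ1 : ρ < 1)
    (f : ℕ → ℝ) (hf0 : f 0 = 0) (hf : ∀ k, 0 ≤ f k) (hfsum : ∑' k : ℕ, f k = 1)
    (M : Ω → ℕ) (S : ℕ → Ω → ℕ) (M' : Ω' → ℕ) (N : ℕ → Ω' → ℕ)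
    (hMmeas : Measurable M) (hSmeas : ∀ j, Measurable (S j))
    (hM'meas : Measurable M') (hNmeas : ∀ j, Measurable (N j))
    (hM : ∀ m, 1 ≤ m → (ℙ {ω | M ω = m}).toReal = ρ * (1 - ρ) ^ (m - 1))
    (hM0 : ℙ {ω | M ω = 0} = 0)
    (hS : ∀ j x, (ℙ {ω | S j ω = x}).toReal = ∑' k : ℕ, f k * nb k p x)
    (hSindep : iIndepFun S ℙ)
    (hMS : IndepFun M (fun ω j => S j ω) ℙ)
    (hM' : ∀ m, 1 ≤ m → (ℙ {ω | M' ω = m}).toReal = ρ * (1 - ρ) ^ (m - 1))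
    (hM'0 : ℙ {ω | M' ω = 0} = 0)
    (hN : ∀ j k, (ℙ {ω | N j ω = k}).toReal = f k)
    (hNindep : iIndepFun N ℙ)
    (hM'N : IndepFun M' (fun ω j => N j ω) ℙ)
    (x : ℕ) :
    (ℙ {ω | ∑ j ∈ Finset.range (M ω), S j ω = x}).toReal =
      ∑' k : ℕ, (ℙ {ω | ∑ j ∈ Finset.range (M' ω), N j ω = k}).toReal * nb k p x :=
  compound_tgeom_nbm_general p ρ hp0 hp1 f hf hfsum M S M' N hMmeas hSmeas hM'meas hNmeas hM hM0 hS
    hSindep hMS hM' hM'0 hN hNindep hM'N x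
end

section
/- If Λ ~ ErlangMixture(π, β), i.e., Λ has density ∑_{k=1}^∞ q_k·erl(k,β)(λ) where erl(k,β) is the Erlang(k,β) density, and X | (Λ = λ) ~ Poisson(λ), then X ~ NBM(π, β/(β+1)): for every x ≥ 0, ∫_0^∞ (e^{-λ}λ^x/x!)·∑_{k=1}^∞ q_k·erl(k,β)(λ) dλ = ∑_{k=1}^∞ q_k·nb(k, β/(β+1))(x). -/
/-! The Poisson weight times `erl(k, β)` is `β ^ k / (x! (k - 1)!)` times
`λ ^ (x + k - 1) e^{-(β + 1) λ}`, a Gamma integral equal to `(x + k - 1)! / (β + 1) ^ (x + k)`;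
the result is `C(x + k - 1, x) β ^ k / (β + 1) ^ (x + k) = nb(k, β / (β + 1))(x)`.
Integral and sum over `k` may be exchanged because the weights `q k` are bounded (a convergent
series) and the nonnegative terms `nb(k, β / (β + 1))(x)` are summable in `k`. -/

open MeasureTheory Set Real
open scoped Nat

noncomputable def poissonWeight (l : ℝ) (x : ℕ) : ℝ := exp (-l) * l ^ x / x !

/-- The density `erl(k + 1, β)`: the shape is shifted by one, as in the sums of the theorem. -/
noncomputable def erlangDensity (β : ℝ) (k : ℕ) (l : ℝ) : ℝ :=
  β ^ (k + 1) * l ^ k * exp (-β * l) / k !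

lemma integrableOn_pow_mul_exp_neg_mul_Ioi (n : ℕ) {r : ℝ} (hr : 0 < r) :
    IntegrableOn (fun t : ℝ => t ^ n * exp (-(r * t))) (Ioi 0) := by
  have hn : (-1 : ℝ) < n := neg_one_lt_zero.trans_le n.cast_nonneg
  refine (integrableOn_rpow_mul_exp_neg_mul_rpow hn zero_lt_one hr).congr_fun
    (fun t _ => ?_) measurableSet_Ioi
  simp only [rpow_one, rpow_natCast, neg_mul]

lemma integral_pow_mul_exp_neg_mul_Ioi (n : ℕ) {r : ℝ} (hr : 0 < r) :
    ∫ t in Ioi (0 : ℝ), t ^ n * exp (-(r * t)) = n ! / r ^ (n + 1) := by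
  have h := integral_rpow_mul_exp_neg_mul_Ioi (a := n + 1) (by positivity) hr
  simp only [add_sub_cancel_right, rpow_natCast] at h
  rw [h, Gamma_nat_eq_factorial, ← Nat.cast_succ, rpow_natCast, one_div, inv_pow,
    inv_mul_eq_div]

lemma nb_succ_eq (k x : ℕ) (p : ℝ) :
    nb (k + 1) p x = (k + x).choose x * p ^ k * (p * (1 - p) ^ x) := by
  rw [nb, show k + 1 + x - 1 = k + x by omega, pow_succ]
  ring

lemma summable_nb_succ (x : ℕ) {p : ℝ} (hp : ‖p‖ < 1) :
    Summable fun k => nb (k + 1) p x := by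
  simp_rw [nb_succ_eq]
  exact (summable_choose_mul_geometric_of_norm_lt_one x hp).mul_right _

lemma poissonWeight_mul_erlangDensity (β l : ℝ) (x k : ℕ) :
    poissonWeight l x * erlangDensity β k l
      = β ^ (k + 1) / (x ! * k !) * (l ^ (x + k) * exp (-((β + 1) * l))) := by
  rw [poissonWeight, erlangDensity, pow_add, show -((β + 1) * l) = -l + -β * l by ring, exp_add]
  field_simp
  ring

lemma integrableOn_poissonWeight_mul_erlangDensity {β : ℝ} (hβ : 0 < β) (x k : ℕ) :
    IntegrableOn (fun l => poissonWeight l x * erlangDensity β k l) (Ioi 0) := by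
  simp_rw [poissonWeight_mul_erlangDensity]
  exact (integrableOn_pow_mul_exp_neg_mul_Ioi (x + k) (by linarith)).const_mul _

lemma integral_poissonWeight_mul_erlangDensity {β : ℝ} (hβ : 0 < β) (x k : ℕ) :
    ∫ l in Ioi 0, poissonWeight l x * erlangDensity β k l = nb (k + 1) (β / (β + 1)) x := by
  have hβ1 : 0 < β + 1 := by linarith
  simp_rw [poissonWeight_mul_erlangDensity]
  rw [integral_const_mul, integral_pow_mul_exp_neg_mul_Ioi _ hβ1, nb_succ_eq, add_comm k x,
    Nat.cast_add_choose, show 1 - β / (β + 1) = 1 / (β + 1) by field_simp; ring, div_pow,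
    div_pow, one_pow]
  field_simp
  ring

lemma integral_tsum_mul_of_abs_le {α ι : Type*} [MeasurableSpace α] [Countable ι]
    {μ : Measure α} {q : ι → ℝ} {C : ℝ} (hq : ∀ k, |q k| ≤ C) {f : ι → α → ℝ}
    (hf : ∀ k, Integrable (f k) μ) (hf0 : ∀ k, 0 ≤ᵐ[μ] f k)
    (hsum : Summable fun k => ∫ a, f k a ∂μ) :
    ∫ a, ∑' k, q k * f k a ∂μ = ∑' k, q k * ∫ a, f k a ∂μ := by
  have hnorm : ∀ k, ∫ a, ‖q k * f k a‖ ∂μ = |q k| * ∫ a, f k a ∂μ := fun k => by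
    rw [← integral_const_mul]
    refine integral_congr_ae ((hf0 k).mono fun a ha => ?_)
    dsimp only
    rw [norm_mul, norm_eq_abs, norm_of_nonneg ha]
  have hsum_norm : Summable fun k => ∫ a, ‖q k * f k a‖ ∂μ := by
    simp_rw [hnorm]
    have hint0 k : 0 ≤ ∫ a, f k a ∂μ := integral_nonneg_of_ae (hf0 k)
    exact (hsum.mul_left C).of_nonneg_of_le (fun k => mul_nonneg (abs_nonneg _) (hint0 k))
      (fun k => mul_le_mul_of_nonneg_right (hq k) (hint0 k))
  rw [← integral_tsum_of_summable_integral_norm (fun k => (hf k).const_mul (q k)) hsum_norm]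
  simp_rw [integral_const_mul]

theorem mixed_poisson_erlang_is_nbm_general (β : ℝ) (hβ : 0 < β)
    (q : ℕ → ℝ) (hqsum : ∑' k : ℕ, q (k + 1) = 1) (x : ℕ) :
    ∫ l in Set.Ioi (0 : ℝ),
        (Real.exp (-l) * l ^ x / (Nat.factorial x)) *
          ∑' k : ℕ, q (k + 1) * (β ^ (k + 1) * l ^ k * Real.exp (-β * l) / (Nat.factorial k)) =
      ∑' k : ℕ, q (k + 1) * nb (k + 1) (β / (β + 1)) x := by
  have hq : Summable fun k => q (k + 1) := by
    by_contra h
    simp [tsum_eq_zero_of_not_summable h] at hqsum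
  have hq_le k : |q (k + 1)| ≤ ∑' j, |q (j + 1)| :=
    hq.abs.le_tsum k fun j _ => abs_nonneg _
  have hp : ‖β / (β + 1)‖ < 1 := by
    rw [norm_of_nonneg (by positivity), div_lt_one (by linarith)]
    linarith
  have hf0 k :
      0 ≤ᵐ[volume.restrict (Ioi 0)] fun l => poissonWeight l x * erlangDensity β k l :=
    ae_restrict_of_forall_mem measurableSet_Ioi fun l (hl : 0 < l) => by
      unfold poissonWeight erlangDensity
      positivity
  show ∫ l in Ioi 0, poissonWeight l x * ∑' k, q (k + 1) * erlangDensity β k l = _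
  simp_rw [← tsum_mul_left, mul_left_comm (poissonWeight _ x)]
  rw [integral_tsum_mul_of_abs_le hq_le (integrableOn_poissonWeight_mul_erlangDensity hβ x) hf0
    (by simpa only [integral_poissonWeight_mul_erlangDensity hβ] using summable_nb_succ x hp)]
  simp_rw [integral_poissonWeight_mul_erlangDensity hβ]

/-- If `Λ ~ ErlangMixture(π, β)`, with density `∑_{k≥1} q k · erl(k,β)(λ)` where
`erl(k,β)(λ) = β^k λ^{k-1} e^{-βλ}/(k-1)!`, and `X | (Λ = λ) ~ Poisson λ`, then
`X ~ NBM(π, β/(β+1))`: for every `x ≥ 0`,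
`∫_0^∞ (e^{-λ} λ^x / x!) ∑_{k≥1} q k · erl(k,β)(λ) dλ = ∑_{k≥1} q k · nb(k, β/(β+1))(x)`. -/
theorem mixed_poisson_erlang_is_nbm (β : ℝ) (hβ : 0 < β)
    (q : ℕ → ℝ) (hq : ∀ k, 0 ≤ q k) (hqsum : ∑' k : ℕ, q (k + 1) = 1) (x : ℕ) :
    ∫ l in Set.Ioi (0 : ℝ),
        (Real.exp (-l) * l ^ x / (Nat.factorial x)) *
          ∑' k : ℕ, q (k + 1) * (β ^ (k + 1) * l ^ k * Real.exp (-β * l) / (Nat.factorial k)) =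
      ∑' k : ℕ, q (k + 1) * nb (k + 1) (β / (β + 1)) x :=
  mixed_poisson_erlang_is_nbm_general β hβ q hqsum x
end
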